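/- A finite simple graph G satisfies c₂(G) ≤ 2 if and only if G contains none of the following eight graphs as an induced subgraph: P₄ (the path on 4 vertices); P₃ + K₂ (the disjoint union of a path on 3 vertices and a single edge); 3K₂ (the disjoint union of three edges); the dart (the graph obtained from K₄ minus one edge by adding a new vertex adjacent to exactly one of the two degree-3 vertices); the graph ⋉ (a triangle together with two new vertices, each adjacent to exactly one and the same vertex of the triangle); the full house (K₄ together with a new vertex adjacent to exactly two vertices of the K₄); K₃,₃ (the complete bipartite graph with both parts of size 3); and W₅ (the wheel on 5 vertices: a 4-cycle together with a vertex adjacent to all four cycle vertices). -/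

import Mathlib

open Matrix

/-- A subgraph complementation system for `G`: a finite collection (multiset) of subsets of
vertices such that two distinct vertices are adjacent iff they lie together in an odd
number of the sets. -/
def IsSCS {V : Type*} [DecidableEq V] (G : SimpleGraph V) (𝒞 : Multiset (Finset V)) : Prop :=
  ∀ u v : V, u ≠ v →
    (G.Adj u v ↔ Odd (Multiset.card (𝒞.filter (fun C => u ∈ C ∧ v ∈ C))))

/-- The subgraph complementation number `c₂(G)`: the minimum cardinality of a subgraph
complementation system for `G`. -/
noncomputable def c2 {V : Type*} [DecidableEq V] (G : SimpleGraph V) : ℕ :=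
  sInf {k | ∃ 𝒞 : Multiset (Finset V), IsSCS G 𝒞 ∧ Multiset.card 𝒞 = k}

/-- A symmetric matrix over `F₂` fits `G` if its off-diagonal entries record adjacency. -/
def FitsF2 {V : Type*} (G : SimpleGraph V) (A : Matrix V V (ZMod 2)) : Prop :=
  A.IsSymm ∧ ∀ u v : V, u ≠ v → (A u v = 1 ↔ G.Adj u v)

/-- The minimum rank of `G` over `F₂`: the minimum rank of a symmetric matrix over `F₂`
that fits `G`. -/
noncomputable def mrF2 {V : Type*} [Fintype V] (G : SimpleGraph V) : ℕ :=
  sInf {k | ∃ A : Matrix V V (ZMod 2), FitsF2 G A ∧ A.rank = k}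

/-- The graph on `Fin n` with the given list of edges. -/
def graphOfEdges (n : ℕ) (l : List (Fin n × Fin n)) : SimpleGraph (Fin n) :=
  SimpleGraph.fromRel (fun u v => (u, v) ∈ l)

/-- The path on 4 vertices. -/
def pathP4 : SimpleGraph (Fin 4) := graphOfEdges 4 [(0, 1), (1, 2), (2, 3)]

/-- The disjoint union of a path on 3 vertices and a single edge. -/
def p3PlusK2 : SimpleGraph (Fin 5) := graphOfEdges 5 [(0, 1), (1, 2), (3, 4)]

/-- The disjoint union of three edges. -/
def threeK2 : SimpleGraph (Fin 6) := graphOfEdges 6 [(0, 1), (2, 3), (4, 5)]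

/-- The dart: `K₄` minus the edge `{2,3}`, together with a new vertex `4` adjacent to the
degree-3 vertex `0`. -/
def dart : SimpleGraph (Fin 5) :=
  graphOfEdges 5 [(0, 1), (0, 2), (0, 3), (1, 2), (1, 3), (0, 4)]

/-- The graph `⋉`: a triangle `0,1,2` together with two new vertices `3`, `4`, each adjacent
to the same triangle vertex `0`. -/
def ltimesGraph : SimpleGraph (Fin 5) :=
  graphOfEdges 5 [(0, 1), (1, 2), (0, 2), (0, 3), (0, 4)]

/-- The full house: `K₄` on `0,1,2,3` together with a new vertex `4` adjacent to exactly the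
two vertices `0` and `1`. -/
def fullHouse : SimpleGraph (Fin 5) :=
  graphOfEdges 5 [(0, 1), (0, 2), (0, 3), (1, 2), (1, 3), (2, 3), (4, 0), (4, 1)]

/-- The complete bipartite graph `K₃,₃` with parts `{0,1,2}` and `{3,4,5}`. -/
def k33 : SimpleGraph (Fin 6) :=
  graphOfEdges 6 [(0, 3), (0, 4), (0, 5), (1, 3), (1, 4), (1, 5), (2, 3), (2, 4), (2, 5)]

/-- The wheel `W₅`: a 4-cycle `1,2,3,4` together with the hub `0` adjacent to all of them. -/
def wheelW5 : SimpleGraph (Fin 5) :=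
  graphOfEdges 5 [(0, 1), (0, 2), (0, 3), (0, 4), (1, 2), (2, 3), (3, 4), (4, 1)]

/-- `G` contains `H` as an induced subgraph. -/
def HasInduced {W V : Type*} (H : SimpleGraph W) (G : SimpleGraph V) : Prop :=
  Nonempty (H ↪g G)

/-!
Write `A = C₁ \ C₂`, `B = C₂ \ C₁` and `D = C₁ ∩ C₂`. Two sets `C₁`, `C₂` form a subgraph
complementation system exactly when `A` and `B` are cliques with no edges between them, `D` is
an independent set joined to every vertex of `A ∪ B`, and all other vertices are isolated
(`SimpleGraph.IsCliquePairJoin`). Since `c₂` cannot increase on induced subgraphs and none of the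
eight graphs has this shape (a finite check), the condition is necessary.

Conversely, if `G` is a disjoint union of cliques, `3K₂`-freeness leaves at most two nontrivial
ones. Otherwise take an induced path `p - q - r` and let `S` be the common neighbourhood of `p`
and `r`. If `S` contains an edge, or some non-isolated vertex is adjacent to neither `p` nor `r`,
then `p` and `r` have the same neighbours, `S` splits into two cliques, and `D` is the set of
non-isolated non-neighbours of `p`. If neither happens, take `A = {p} ∪ N(p) \ N(r)`,
`B = {r} ∪ N(r) \ N(p)` and `D = S`. Each step rules out a bad configuration by exhibiting one
of the eight graphs as an induced subgraph.
-/

section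

variable {V W : Type*}

section Complementation

variable [DecidableEq V]

theorem isSCS_pair_iff {G : SimpleGraph V} {C₁ C₂ : Finset V} :
    IsSCS G {C₁, C₂} ↔
      ∀ u v, u ≠ v → (G.Adj u v ↔ Xor (u ∈ C₁ ∧ v ∈ C₁) (u ∈ C₂ ∧ v ∈ C₂)) := by
  refine forall₂_congr fun u v => imp_congr_right fun _ => iff_congr Iff.rfl ?_
  rw [Multiset.insert_eq_cons, Multiset.filter_cons, Multiset.filter_singleton]
  by_cases h₁ : u ∈ C₁ ∧ v ∈ C₁ <;> by_cases h₂ : u ∈ C₂ ∧ v ∈ C₂ <;> simp [h₁, h₂]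

theorem exists_isSCS [Fintype V] (G : SimpleGraph V) : ∃ 𝒞, IsSCS G 𝒞 := by
  classical
  refine ⟨G.edgeFinset.val.map Sym2.toFinset, fun u v huv => ?_⟩
  rw [Multiset.filter_map, Multiset.card_map]
  have : G.edgeFinset.val.filter ((fun C => u ∈ C ∧ v ∈ C) ∘ Sym2.toFinset) =
      (G.edgeFinset.filter (· = s(u, v))).val := by
    rw [Finset.filter_val]
    refine Multiset.filter_congr fun e _ => ?_
    simp [Sym2.mem_and_mem_iff huv]
  rw [this]
  by_cases h : G.Adj u v <;> simp [Finset.filter_eq', h]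

theorem exists_isSCS_card_eq_c2 [Fintype V] (G : SimpleGraph V) :
    ∃ 𝒞, IsSCS G 𝒞 ∧ Multiset.card 𝒞 = c2 G := by
  obtain ⟨𝒞, h𝒞⟩ := exists_isSCS G
  exact Nat.sInf_mem (s := {k | ∃ 𝒞, IsSCS G 𝒞 ∧ Multiset.card 𝒞 = k}) ⟨_, 𝒞, h𝒞, rfl⟩

theorem IsSCS.cons_empty {G : SimpleGraph V} {𝒞 : Multiset (Finset V)} (h : IsSCS G 𝒞) :
    IsSCS G (∅ ::ₘ 𝒞) := fun u v huv => by
  rw [Multiset.filter_cons_of_neg _ (by simp)]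
  exact h u v huv

theorem c2_le_two_iff [Fintype V] {G : SimpleGraph V} :
    c2 G ≤ 2 ↔ ∃ C₁ C₂ : Finset V, IsSCS G {C₁, C₂} := by
  refine ⟨fun h => ?_, fun ⟨C₁, C₂, h⟩ => Nat.sInf_le ⟨_, h, rfl⟩⟩
  obtain ⟨𝒞, h𝒞, hcard⟩ := exists_isSCS_card_eq_c2 G
  replace hcard : Multiset.card 𝒞 ≤ 2 := hcard.trans_le h
  interval_cases hc : Multiset.card 𝒞
  · rw [Multiset.card_eq_zero.1 hc] at h𝒞
    exact ⟨∅, ∅, h𝒞.cons_empty.cons_empty⟩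
  · obtain ⟨C, rfl⟩ := Multiset.card_eq_one.1 hc
    exact ⟨∅, C, h𝒞.cons_empty⟩
  · obtain ⟨C₁, C₂, rfl⟩ := Multiset.card_eq_two.1 hc
    exact ⟨C₁, C₂, h𝒞⟩

theorem c2_le_c2_of_embedding [Fintype V] [DecidableEq W] {H : SimpleGraph W}
    {G : SimpleGraph V} (f : H ↪g G) : c2 H ≤ c2 G := by
  obtain ⟨𝒞, h𝒞, hcard⟩ := exists_isSCS_card_eq_c2 G
  refine Nat.sInf_le ⟨𝒞.map fun C => C.preimage f f.injective.injOn, fun u v huv => ?_, ?_⟩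
  · rw [← f.map_adj_iff, h𝒞 _ _ (f.injective.ne huv), Multiset.filter_map, Multiset.card_map]
    simp only [Function.comp_def, Finset.mem_preimage]
  · rw [Multiset.card_map, hcard]

theorem not_hasInduced_of_c2_lt [Fintype V] [DecidableEq W] {H : SimpleGraph W}
    {G : SimpleGraph V} {k : ℕ} (hG : c2 G ≤ k) (hH : k < c2 H) : ¬HasInduced H G :=
  fun ⟨f⟩ => (c2_le_c2_of_embedding f |>.trans hG).not_gt hH

theorem two_lt_c2_iff [Fintype W] [DecidableEq W] {H : SimpleGraph W} :
    2 < c2 H ↔ ¬∃ C₁ C₂ : Finset W,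
      ∀ u v, u ≠ v → (H.Adj u v ↔ Xor (u ∈ C₁ ∧ v ∈ C₁) (u ∈ C₂ ∧ v ∈ C₂)) := by
  simp only [← not_le, c2_le_two_iff, isSCS_pair_iff]

end Complementation

instance {n : ℕ} {l : List (Fin n × Fin n)} : DecidableRel (graphOfEdges n l).Adj :=
  fun a b => decidable_of_iff (a ≠ b ∧ ((a, b) ∈ l ∨ (b, a) ∈ l))
    (by simp [graphOfEdges, SimpleGraph.fromRel_adj])

theorem two_lt_c2_pathP4 : 2 < c2 pathP4 := two_lt_c2_iff.2 (by unfold pathP4; decide)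

theorem two_lt_c2_p3PlusK2 : 2 < c2 p3PlusK2 := two_lt_c2_iff.2 (by unfold p3PlusK2; decide)

set_option maxRecDepth 40000 in
theorem two_lt_c2_threeK2 : 2 < c2 threeK2 := two_lt_c2_iff.2 (by unfold threeK2; decide)

theorem two_lt_c2_dart : 2 < c2 dart := two_lt_c2_iff.2 (by unfold dart; decide)

theorem two_lt_c2_ltimesGraph : 2 < c2 ltimesGraph :=
  two_lt_c2_iff.2 (by unfold ltimesGraph; decide)

theorem two_lt_c2_fullHouse : 2 < c2 fullHouse := two_lt_c2_iff.2 (by unfold fullHouse; decide)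

set_option maxRecDepth 40000 in
theorem two_lt_c2_k33 : 2 < c2 k33 := two_lt_c2_iff.2 (by unfold k33; decide)

theorem two_lt_c2_wheelW5 : 2 < c2 wheelW5 := two_lt_c2_iff.2 (by unfold wheelW5; decide)

theorem hasInduced_of_adj_iff [LinearOrder W] {H : SimpleGraph W} {G : SimpleGraph V}
    (f : W → V) (hadj : ∀ i j, i < j → (G.Adj (f i) (f j) ↔ H.Adj i j))
    (htwin : ∀ i j, i < j → (∀ k, H.Adj i k ↔ H.Adj j k) → f i ≠ f j) : HasInduced H G := by
  have hadj' : ∀ i j, i ≠ j → (G.Adj (f i) (f j) ↔ H.Adj i j) := fun i j hij =>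
    hij.lt_or_gt.elim (hadj i j) fun h => by rw [G.adj_comm, H.adj_comm]; exact hadj j i h
  -- a collapsed pair `f i = f j` would force `i` and `j` to have the same neighbours in `H`
  have hinj : Function.Injective f := by
    intro i j hf
    by_contra hij
    wlog hlt : i < j generalizing i j
    · exact this hf.symm (Ne.symm hij) ((Ne.symm hij).lt_of_le (not_lt.1 hlt))
    refine htwin i j hlt (fun k => ?_) hf
    rcases eq_or_ne i k with rfl | hik
    · simpa [hf] using (hadj' j i (Ne.symm hij)).symm
    rcases eq_or_ne j k with rfl | hjk
    · simpa [hf] using hadj' i j hij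
    rw [← hadj' i k hik, ← hadj' j k hjk, hf]
  refine ⟨⟨⟨f, hinj⟩, fun {i j} => ?_⟩⟩
  rcases eq_or_ne i j with rfl | hij
  · simp
  · exact hadj' i j hij

section Patterns

/-! The hypotheses give the adjacency of every pair of the listed vertices, in lexicographic
order; distinctness is required only for pairs with equal neighbourhoods in the pattern
(see `hasInduced_of_adj_iff`). -/

variable {G : SimpleGraph V} {a b c d e f : V}

theorem hasInduced_pathP4 (hab : G.Adj a b) (hac : ¬G.Adj a c) (had : ¬G.Adj a d)
    (hbc : G.Adj b c) (hbd : ¬G.Adj b d) (hcd : G.Adj c d) : HasInduced pathP4 G := by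
  refine hasInduced_of_adj_iff ![a, b, c, d] ?_ ?_ <;> unfold pathP4 <;> intro i j hij <;>
    fin_cases i <;> fin_cases j <;> first
      | exact absurd hij (by decide)
      | exact fun h => absurd h (by decide)
      | exact iff_of_true ‹_› (by decide)
      | exact iff_of_false ‹_› (by decide)

theorem hasInduced_p3PlusK2 (hab : G.Adj a b) (hac : ¬G.Adj a c) (had : ¬G.Adj a d)
    (hae : ¬G.Adj a e) (hbc : G.Adj b c) (hbd : ¬G.Adj b d) (hbe : ¬G.Adj b e)
    (hcd : ¬G.Adj c d) (hce : ¬G.Adj c e) (hde : G.Adj d e) (hac' : a ≠ c) :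
    HasInduced p3PlusK2 G := by
  refine hasInduced_of_adj_iff ![a, b, c, d, e] ?_ ?_ <;> unfold p3PlusK2 <;> intro i j hij <;>
    fin_cases i <;> fin_cases j <;> first
      | exact absurd hij (by decide)
      | exact fun h => absurd h (by decide)
      | exact iff_of_true ‹_› (by decide)
      | exact iff_of_false ‹_› (by decide)
      | exact fun _ => ‹_›

theorem hasInduced_threeK2 (hab : G.Adj a b) (hac : ¬G.Adj a c) (had : ¬G.Adj a d)
    (hae : ¬G.Adj a e) (haf : ¬G.Adj a f) (hbc : ¬G.Adj b c) (hbd : ¬G.Adj b d)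
    (hbe : ¬G.Adj b e) (hbf : ¬G.Adj b f) (hcd : G.Adj c d) (hce : ¬G.Adj c e)
    (hcf : ¬G.Adj c f) (hde : ¬G.Adj d e) (hdf : ¬G.Adj d f) (hef : G.Adj e f) :
    HasInduced threeK2 G := by
  refine hasInduced_of_adj_iff ![a, b, c, d, e, f] ?_ ?_ <;> unfold threeK2 <;>
    intro i j hij <;> fin_cases i <;> fin_cases j <;> first
      | exact absurd hij (by decide)
      | exact fun h => absurd h (by decide)
      | exact iff_of_true ‹_› (by decide)
      | exact iff_of_false ‹_› (by decide)

theorem hasInduced_dart (hab : G.Adj a b) (hac : G.Adj a c) (had : G.Adj a d) (hae : G.Adj a e)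
    (hbc : G.Adj b c) (hbd : G.Adj b d) (hbe : ¬G.Adj b e) (hcd : ¬G.Adj c d) (hce : ¬G.Adj c e)
    (hde : ¬G.Adj d e) (hcd' : c ≠ d) : HasInduced dart G := by
  refine hasInduced_of_adj_iff ![a, b, c, d, e] ?_ ?_ <;> unfold dart <;> intro i j hij <;>
    fin_cases i <;> fin_cases j <;> first
      | exact absurd hij (by decide)
      | exact fun h => absurd h (by decide)
      | exact iff_of_true ‹_› (by decide)
      | exact iff_of_false ‹_› (by decide)
      | exact fun _ => ‹_›

theorem hasInduced_ltimesGraph (hab : G.Adj a b) (hac : G.Adj a c) (had : G.Adj a d)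
    (hae : G.Adj a e) (hbc : G.Adj b c) (hbd : ¬G.Adj b d) (hbe : ¬G.Adj b e)
    (hcd : ¬G.Adj c d) (hce : ¬G.Adj c e) (hde : ¬G.Adj d e) (hde' : d ≠ e) :
    HasInduced ltimesGraph G := by
  refine hasInduced_of_adj_iff ![a, b, c, d, e] ?_ ?_ <;> unfold ltimesGraph <;>
    intro i j hij <;> fin_cases i <;> fin_cases j <;> first
      | exact absurd hij (by decide)
      | exact fun h => absurd h (by decide)
      | exact iff_of_true ‹_› (by decide)
      | exact iff_of_false ‹_› (by decide)
      | exact fun _ => ‹_›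

theorem hasInduced_fullHouse (hab : G.Adj a b) (hac : G.Adj a c) (had : G.Adj a d)
    (hae : G.Adj a e) (hbc : G.Adj b c) (hbd : G.Adj b d) (hbe : G.Adj b e) (hcd : G.Adj c d)
    (hce : ¬G.Adj c e) (hde : ¬G.Adj d e) : HasInduced fullHouse G := by
  refine hasInduced_of_adj_iff ![a, b, c, d, e] ?_ ?_ <;> unfold fullHouse <;>
    intro i j hij <;> fin_cases i <;> fin_cases j <;> first
      | exact absurd hij (by decide)
      | exact fun h => absurd h (by decide)
      | exact iff_of_true ‹_› (by decide)
      | exact iff_of_false ‹_› (by decide)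

theorem hasInduced_k33 (hab : ¬G.Adj a b) (hac : ¬G.Adj a c) (had : G.Adj a d)
    (hae : G.Adj a e) (haf : G.Adj a f) (hbc : ¬G.Adj b c) (hbd : G.Adj b d) (hbe : G.Adj b e)
    (hbf : G.Adj b f) (hcd : G.Adj c d) (hce : G.Adj c e) (hcf : G.Adj c f)
    (hde : ¬G.Adj d e) (hdf : ¬G.Adj d f) (hef : ¬G.Adj e f)
    (hab' : a ≠ b) (hac' : a ≠ c) (hbc' : b ≠ c) (hde' : d ≠ e) (hdf' : d ≠ f) (hef' : e ≠ f) :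
    HasInduced k33 G := by
  refine hasInduced_of_adj_iff ![a, b, c, d, e, f] ?_ ?_ <;> unfold k33 <;> intro i j hij <;>
    fin_cases i <;> fin_cases j <;> first
      | exact absurd hij (by decide)
      | exact fun h => absurd h (by decide)
      | exact iff_of_true ‹_› (by decide)
      | exact iff_of_false ‹_› (by decide)
      | exact fun _ => ‹_›

theorem hasInduced_wheelW5 (hab : G.Adj a b) (hac : G.Adj a c) (had : G.Adj a d)
    (hae : G.Adj a e) (hbc : G.Adj b c) (hbd : ¬G.Adj b d) (hbe : G.Adj b e) (hcd : G.Adj c d)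
    (hce : ¬G.Adj c e) (hde : G.Adj d e) (hbd' : b ≠ d) (hce' : c ≠ e) :
    HasInduced wheelW5 G := by
  refine hasInduced_of_adj_iff ![a, b, c, d, e] ?_ ?_ <;> unfold wheelW5 <;> intro i j hij <;>
    fin_cases i <;> fin_cases j <;> first
      | exact absurd hij (by decide)
      | exact fun h => absurd h (by decide)
      | exact iff_of_true ‹_› (by decide)
      | exact iff_of_false ‹_› (by decide)
      | exact fun _ => ‹_›

end Patterns

namespace SimpleGraph

variable {G : SimpleGraph V}

def IsClusterOn (G : SimpleGraph V) (T : Set V) : Prop :=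
  ∀ a ∈ T, ∀ b ∈ T, ∀ c ∈ T, G.Adj a b → G.Adj b c → a ≠ c → G.Adj a c

structure IsCliquePair (G : SimpleGraph V) (A B : Set V) : Prop where
  isClique_left : G.IsClique A
  isClique_right : G.IsClique B
  disjoint : Disjoint A B
  not_adj : ∀ a ∈ A, ∀ b ∈ B, ¬G.Adj a b

structure IsCliquePairJoin (G : SimpleGraph V) (A B D : Set V) : Prop
    extends G.IsCliquePair A B where
  isIndepSet : G.IsIndepSet D
  adj_left : ∀ a ∈ A, ∀ d ∈ D, G.Adj a d
  adj_right : ∀ b ∈ B, ∀ d ∈ D, G.Adj b d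
  support_subset : G.support ⊆ A ∪ B ∪ D

variable {A B D : Set V}

theorem IsCliquePairJoin.adj_iff (h : G.IsCliquePairJoin A B D) {u v : V} (huv : u ≠ v) :
    G.Adj u v ↔ Xor (u ∈ A ∪ D ∧ v ∈ A ∪ D) (u ∈ B ∪ D ∧ v ∈ B ∪ D) := by
  have hAD : ∀ x ∈ A, x ∉ D := fun x ha hd => G.irrefl (h.adj_left x ha x hd)
  have hBD : ∀ x ∈ B, x ∉ D := fun x hb hd => G.irrefl (h.adj_right x hb x hd)
  have hAB : ∀ x ∈ A, x ∉ B := fun _ ha hb => Set.disjoint_left.1 h.disjoint ha hb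
  have hsupp : ∀ x y, G.Adj x y → x ∈ A ∪ B ∪ D := fun x y hxy => h.support_subset ⟨y, hxy⟩
  have hA : u ∈ A → v ∈ A → G.Adj u v := fun hu hv => h.isClique_left hu hv huv
  have hB : u ∈ B → v ∈ B → G.Adj u v := fun hu hv => h.isClique_right hu hv huv
  have hD : u ∈ D → v ∈ D → ¬G.Adj u v := fun hu hv => h.isIndepSet hu hv huv
  have hAB₁ : u ∈ A → v ∈ B → ¬G.Adj u v := fun hu hv => h.not_adj u hu v hv
  have hAB₂ : v ∈ A → u ∈ B → ¬G.Adj u v := fun hv hu hadj => h.not_adj v hv u hu hadj.symm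
  have hAD₁ : u ∈ A → v ∈ D → G.Adj u v := fun hu hv => h.adj_left u hu v hv
  have hAD₂ : v ∈ A → u ∈ D → G.Adj u v := fun hv hu => (h.adj_left v hv u hu).symm
  have hBD₁ : u ∈ B → v ∈ D → G.Adj u v := fun hu hv => h.adj_right u hu v hv
  have hBD₂ : v ∈ B → u ∈ D → G.Adj u v := fun hv hu => (h.adj_right v hv u hu).symm
  have hu := hsupp u v
  have hv := fun hadj : G.Adj u v => hsupp v u hadj.symm
  grind

theorem IsCliquePairJoin.c2_le_two [Fintype V] [DecidableEq V] (h : G.IsCliquePairJoin A B D) :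
    c2 G ≤ 2 := by
  classical
  refine c2_le_two_iff.2 ⟨(A ∪ D).toFinset, (B ∪ D).toFinset, isSCS_pair_iff.2 fun u v huv => ?_⟩
  simp only [Set.mem_toFinset]
  exact h.adj_iff huv

theorem IsIndepSet.isClusterOn {T : Set V} (h : G.IsIndepSet T) : G.IsClusterOn T :=
  fun _ ha _ hb _ _ hab _ _ => absurd hab (h ha hb hab.ne)

theorem IsClusterOn.isCliquePair {T : Set V} {x : V} (hT : G.IsClusterOn T) (hx : x ∈ T)
    (hrest : G.IsClique {v ∈ T | ¬(v = x ∨ G.Adj x v)}) :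
    G.IsCliquePair {v ∈ T | v = x ∨ G.Adj x v} {v ∈ T | ¬(v = x ∨ G.Adj x v)} where
  isClique_left := by
    rintro u ⟨hu, rfl | hxu⟩ v ⟨hv, rfl | hxv⟩ huv
    · exact absurd rfl huv
    · exact hxv
    · exact hxu.symm
    · exact hT u hu x hx v hv hxu.symm hxv huv
  isClique_right := hrest
  disjoint := Set.disjoint_left.2 fun _ hA hB => hB.2 hA.2
  not_adj := by
    rintro a ⟨ha, rfl | hxa⟩ b ⟨hb, hxb⟩ hab
    · exact hxb (Or.inr hab)
    · exact hxb (Or.inr (hT x hx a ha b hb hxa hab fun h => hxb (Or.inl h.symm)))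

theorem IsClusterOn.not_adj_of_not_adj {x x' u u' : V} (hT : G.IsClusterOn G.support)
    (hxu : x ≠ u) (hxu' : ¬G.Adj x u) (hx : G.Adj x x') (hu : G.Adj u u') :
    ¬G.Adj x u' ∧ ¬G.Adj x' u ∧ ¬G.Adj x' u' := by
  have h₁ : ¬G.Adj x u' := fun h =>
    hxu' (hT x ⟨x', hx⟩ u' ⟨u, hu.symm⟩ u ⟨u', hu⟩ h hu.symm hxu)
  refine ⟨h₁, fun h => hxu' (hT x ⟨x', hx⟩ x' ⟨x, hx.symm⟩ u ⟨u', hu⟩ hx h hxu), fun h => ?_⟩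
  rcases eq_or_ne x u' with rfl | hxu''
  · exact hxu' hu.symm
  · exact h₁ (hT x ⟨x', hx⟩ x' ⟨x, hx.symm⟩ u' ⟨u, hu.symm⟩ hx h hxu'')

theorem exists_isCliquePairJoin_of_isClusterOn (h3K2 : ¬HasInduced threeK2 G)
    (hT : G.IsClusterOn G.support) : ∃ A B D, G.IsCliquePairJoin A B D := by
  rcases G.support.eq_empty_or_nonempty with hG | ⟨x, hx⟩
  · exact ⟨∅, ∅, ∅, ⟨by simp, by simp, by simp, by simp⟩, by simp, by simp, by simp, by simp [hG]⟩
  have hrest : G.IsClique {v ∈ G.support | ¬(v = x ∨ G.Adj x v)} := by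
    rintro u ⟨⟨u', hu⟩, hxu⟩ v ⟨⟨v', hv⟩, hxv⟩ huv
    rw [not_or] at hxu hxv
    by_contra huv'
    obtain ⟨x', hx'⟩ := hx
    obtain ⟨h₁, h₂, h₃⟩ := hT.not_adj_of_not_adj (Ne.symm hxu.1) hxu.2 hx' hu
    obtain ⟨h₄, h₅, h₆⟩ := hT.not_adj_of_not_adj (Ne.symm hxv.1) hxv.2 hx' hv
    obtain ⟨h₇, h₈, h₉⟩ := hT.not_adj_of_not_adj huv huv' hu hv
    exact h3K2 (hasInduced_threeK2 hx' hxu.2 h₁ hxv.2 h₄ h₂ h₃ h₅ h₆ hu huv' h₇ h₈ h₉ hv)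
  refine ⟨_, _, ∅, { hT.isCliquePair hx hrest with
    isIndepSet := by simp, adj_left := by simp, adj_right := by simp, support_subset := ?_ }⟩
  intro v hv
  by_cases hxv : v = x ∨ G.Adj x v
  · exact Or.inl (Or.inl ⟨hv, hxv⟩)
  · exact Or.inl (Or.inr ⟨hv, hxv⟩)

section InducedPath

variable {p q r s t u w z σ : V}

theorem adj_of_mem_commonNeighbors (hP4 : ¬HasInduced pathP4 G)
    (hP3K2 : ¬HasInduced p3PlusK2 G) (hDart : ¬HasInduced dart G) (hpr : ¬G.Adj p r)
    (hpr' : p ≠ r) (hσ : σ ∈ G.commonNeighbors p r) (hpw : ¬G.Adj p w) (hrw : ¬G.Adj r w)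
    (hwu : G.Adj w u) : G.Adj w σ := by
  obtain ⟨hpσ, hrσ⟩ := hσ
  by_contra hwσ
  by_cases huσ : G.Adj u σ
  · by_cases hup : G.Adj u p
    · by_cases hur : G.Adj u r
      · exact hDart (hasInduced_dart huσ hup hur hwu.symm hpσ.symm hrσ.symm (mt Adj.symm hwσ)
          hpr hpw hrw hpr')
      · exact hP4 (hasInduced_pathP4 hwu hwσ (mt Adj.symm hrw) huσ hur hrσ.symm)
    · exact hP4 (hasInduced_pathP4 hwu hwσ (mt Adj.symm hpw) huσ hup hpσ.symm)
  · by_cases hup : G.Adj u p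
    · exact hP4 (hasInduced_pathP4 hwu (mt Adj.symm hpw) hwσ hup huσ hpσ)
    by_cases hur : G.Adj u r
    · exact hP4 (hasInduced_pathP4 hwu (mt Adj.symm hrw) hwσ hur huσ hrσ)
    · exact hP3K2 (hasInduced_p3PlusK2 hpσ hpr hpw (mt Adj.symm hup) hrσ.symm (mt Adj.symm hwσ)
        (mt Adj.symm huσ) hrw (mt Adj.symm hur) hwu hpr')

theorem adj_of_adj_of_not_adj (hP4 : ¬HasInduced pathP4 G) (hpr : ¬G.Adj p r)
    (hσ : σ ∈ G.commonNeighbors p r) (hpw : G.Adj p w) (hrw : ¬G.Adj r w) : G.Adj w σ := by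
  by_contra hwσ
  exact hP4 (hasInduced_pathP4 hpw.symm hwσ (mt Adj.symm hrw) hσ.1 hpr hσ.2.symm)

theorem isIndepSet_setOf_not_adj (hP4 : ¬HasInduced pathP4 G)
    (hP3K2 : ¬HasInduced p3PlusK2 G) (hDart : ¬HasInduced dart G)
    (hLt : ¬HasInduced ltimesGraph G) (hpr : ¬G.Adj p r) (hpr' : p ≠ r)
    (hq : q ∈ G.commonNeighbors p r) : G.IsIndepSet {w | ¬G.Adj p w ∧ ¬G.Adj r w} := by
  rintro w₁ ⟨hpw₁, hrw₁⟩ w₂ ⟨hpw₂, hrw₂⟩ - hw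
  have hw₁q := adj_of_mem_commonNeighbors hP4 hP3K2 hDart hpr hpr' hq hpw₁ hrw₁ hw
  have hw₂q := adj_of_mem_commonNeighbors hP4 hP3K2 hDart hpr hpr' hq hpw₂ hrw₂ hw.symm
  exact hLt (hasInduced_ltimesGraph hw₁q.symm hw₂q.symm hq.1.symm hq.2.symm hw
    (mt Adj.symm hpw₁) (mt Adj.symm hrw₁) (mt Adj.symm hpw₂) (mt Adj.symm hrw₂) hpr hpr')

theorem exists_isCliquePairJoin_of_forall_adj_iff (hP4 : ¬HasInduced pathP4 G)
    (hP3K2 : ¬HasInduced p3PlusK2 G) (hDart : ¬HasInduced dart G)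
    (hLt : ¬HasInduced ltimesGraph G) (hpr : ¬G.Adj p r) (hpr' : p ≠ r)
    (hN : ∀ w, G.Adj p w ↔ G.Adj r w) {x : V} (hT : G.IsClusterOn (G.commonNeighbors p r))
    (hx : x ∈ G.commonNeighbors p r)
    (hrest : G.IsClique {v ∈ G.commonNeighbors p r | ¬(v = x ∨ G.Adj x v)}) :
    ∃ A B D, G.IsCliquePairJoin A B D := by
  have hadj : ∀ σ ∈ G.commonNeighbors p r, ∀ d ∈ {w ∈ G.support | ¬G.Adj p w}, G.Adj σ d := by
    rintro σ hσ d ⟨⟨u, hdu⟩, hpd⟩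
    exact (adj_of_mem_commonNeighbors hP4 hP3K2 hDart hpr hpr' hσ hpd ((hN d).not.1 hpd) hdu).symm
  have hD : {w ∈ G.support | ¬G.Adj p w} ⊆ {w | ¬G.Adj p w ∧ ¬G.Adj r w} :=
    fun d hd => ⟨hd.2, (hN d).not.1 hd.2⟩
  refine ⟨_, _, {w ∈ G.support | ¬G.Adj p w}, { hT.isCliquePair hx hrest with
    isIndepSet := Set.Pairwise.mono hD (isIndepSet_setOf_not_adj hP4 hP3K2 hDart hLt hpr hpr' hx)
    adj_left := fun a ha => hadj a ha.1
    adj_right := fun b hb => hadj b hb.1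
    support_subset := fun v hv => ?_ }⟩
  by_cases hpv : G.Adj p v
  · have hv' : v ∈ G.commonNeighbors p r := ⟨hpv, (hN v).1 hpv⟩
    by_cases hxv : v = x ∨ G.Adj x v
    · exact Or.inl (Or.inl ⟨hv', hxv⟩)
    · exact Or.inl (Or.inr ⟨hv', hxv⟩)
  · exact Or.inr ⟨hv, hpv⟩

theorem adj_of_adj_of_adj_commonNeighbors (hP4 : ¬HasInduced pathP4 G)
    (hFH : ¬HasInduced fullHouse G) (hpr : ¬G.Adj p r) (hs : s ∈ G.commonNeighbors p r)
    (ht : t ∈ G.commonNeighbors p r) (hst : G.Adj s t) (hpw : G.Adj p w) : G.Adj r w := by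
  by_contra hrw
  by_cases hwt : G.Adj w t
  · by_cases hws : G.Adj w s
    · exact hFH (hasInduced_fullHouse hst hws.symm hs.1.symm hs.2.symm hwt.symm ht.1.symm
        ht.2.symm hpw.symm (mt Adj.symm hrw) hpr)
    · exact hP4 (hasInduced_pathP4 hpw.symm hws (mt Adj.symm hrw) hs.1 hpr hs.2.symm)
  · exact hP4 (hasInduced_pathP4 hpw.symm hwt (mt Adj.symm hrw) ht.1 hpr ht.2.symm)

theorem isClusterOn_commonNeighbors (hW5 : ¬HasInduced wheelW5 G) (hpr : ¬G.Adj p r)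
    (hpr' : p ≠ r) : G.IsClusterOn (G.commonNeighbors p r) := by
  intro a ha b hb c hc hab hbc hac
  by_contra hac'
  exact hW5 (hasInduced_wheelW5 hab.symm hb.1.symm hbc hb.2.symm ha.1.symm hac' ha.2.symm hc.1 hpr
    hc.2.symm hac hpr')

theorem isClique_commonNeighbors_sep_not_adj (hLt : ¬HasInduced ltimesGraph G)
    (hT : G.IsClusterOn (G.commonNeighbors p r)) (hs : s ∈ G.commonNeighbors p r)
    (ht : t ∈ G.commonNeighbors p r) (hst : G.Adj s t) :
    G.IsClique {v ∈ G.commonNeighbors p r | ¬(v = s ∨ G.Adj s v)} := by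
  rintro u ⟨hu, hsu⟩ v ⟨hv, hsv⟩ huv
  rw [not_or] at hsu hsv
  by_contra huv'
  have htu : ¬G.Adj t u := fun h => hsu.2 (hT s hs t ht u hu hst h (Ne.symm hsu.1))
  have htv : ¬G.Adj t v := fun h => hsv.2 (hT s hs t ht v hv hst h (Ne.symm hsv.1))
  exact hLt (hasInduced_ltimesGraph hs.1 ht.1 hu.1 hv.1 hst hsu.2 hsv.2 htu htv huv' huv)

theorem exists_isCliquePairJoin_of_adj_commonNeighbors (hP4 : ¬HasInduced pathP4 G)
    (hP3K2 : ¬HasInduced p3PlusK2 G) (hDart : ¬HasInduced dart G)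
    (hLt : ¬HasInduced ltimesGraph G) (hFH : ¬HasInduced fullHouse G)
    (hW5 : ¬HasInduced wheelW5 G) (hpr : ¬G.Adj p r) (hpr' : p ≠ r)
    (hs : s ∈ G.commonNeighbors p r) (ht : t ∈ G.commonNeighbors p r) (hst : G.Adj s t) :
    ∃ A B D, G.IsCliquePairJoin A B D :=
  have hT := isClusterOn_commonNeighbors hW5 hpr hpr'
  exists_isCliquePairJoin_of_forall_adj_iff hP4 hP3K2 hDart hLt hpr hpr'
    (fun _ => ⟨adj_of_adj_of_adj_commonNeighbors hP4 hFH hpr hs ht hst,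
      adj_of_adj_of_adj_commonNeighbors (p := r) (r := p) hP4 hFH (mt Adj.symm hpr) ⟨hs.2, hs.1⟩
        ⟨ht.2, ht.1⟩ hst⟩)
    hT hs (isClique_commonNeighbors_sep_not_adj hLt hT hs ht hst)

theorem adj_of_adj_of_mem_support (hP4 : ¬HasInduced pathP4 G)
    (hP3K2 : ¬HasInduced p3PlusK2 G) (hDart : ¬HasInduced dart G)
    (hLt : ¬HasInduced ltimesGraph G) (hpr : ¬G.Adj p r) (hpr' : p ≠ r)
    (hq : q ∈ G.commonNeighbors p r) (hzu : G.Adj z u) (hzp : z ≠ p) (hzr : z ≠ r)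
    (hpz : ¬G.Adj p z) (hrz : ¬G.Adj r z) (hpw : G.Adj p w) : G.Adj r w := by
  by_contra hrw
  have hwq : G.Adj w q := adj_of_adj_of_not_adj hP4 hpr hq hpw hrw
  have hzq : G.Adj z q := adj_of_mem_commonNeighbors hP4 hP3K2 hDart hpr hpr' hq hpz hrz hzu
  by_cases hwz : G.Adj w z
  · exact hDart (hasInduced_dart hwq.symm hzq.symm hq.1.symm hq.2.symm hwz hpw.symm
      (mt Adj.symm hrw) (mt Adj.symm hpz) (mt Adj.symm hrz) hpr hzp)
  · exact hLt (hasInduced_ltimesGraph hq.1.symm hwq.symm hzq.symm hq.2.symm hpw hpz hpr hwz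
      (mt Adj.symm hrw) (mt Adj.symm hrz) hzr)

theorem isClique_commonNeighbors_sep_of_isIndepSet (hP4 : ¬HasInduced pathP4 G)
    (hP3K2 : ¬HasInduced p3PlusK2 G) (hDart : ¬HasInduced dart G)
    (hK33 : ¬HasInduced k33 G) (hpr : ¬G.Adj p r) (hpr' : p ≠ r)
    (hq : q ∈ G.commonNeighbors p r) (hS : G.IsIndepSet (G.commonNeighbors p r))
    (hzu : G.Adj z u) (hzp : z ≠ p) (hzr : z ≠ r) (hpz : ¬G.Adj p z) (hrz : ¬G.Adj r z) :
    G.IsClique {v ∈ G.commonNeighbors p r | ¬(v = q ∨ G.Adj q v)} := by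
  rintro u ⟨hu, hqu⟩ v ⟨hv, hqv⟩ huv
  rw [not_or] at hqu hqv
  have hz : ∀ σ ∈ G.commonNeighbors p r, G.Adj σ z := fun σ hσ =>
    (adj_of_mem_commonNeighbors hP4 hP3K2 hDart hpr hpr' hσ hpz hrz hzu).symm
  exact (hK33 (hasInduced_k33 hqu.2 hqv.2 hq.1.symm hq.2.symm (hz q hq) (hS hu hv huv) hu.1.symm
    hu.2.symm (hz u hu) hv.1.symm hv.2.symm (hz v hv) hpr hpz hrz (Ne.symm hqu.1)
    (Ne.symm hqv.1) huv hpr' (Ne.symm hzp) (Ne.symm hzr))).elim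

theorem exists_isCliquePairJoin_of_isIndepSet_of_adj (hP4 : ¬HasInduced pathP4 G)
    (hP3K2 : ¬HasInduced p3PlusK2 G) (hDart : ¬HasInduced dart G)
    (hLt : ¬HasInduced ltimesGraph G) (hK33 : ¬HasInduced k33 G) (hpr : ¬G.Adj p r)
    (hpr' : p ≠ r) (hq : q ∈ G.commonNeighbors p r) (hS : G.IsIndepSet (G.commonNeighbors p r))
    (hzu : G.Adj z u) (hzp : z ≠ p) (hzr : z ≠ r) (hpz : ¬G.Adj p z) (hrz : ¬G.Adj r z) :
    ∃ A B D, G.IsCliquePairJoin A B D :=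
  exists_isCliquePairJoin_of_forall_adj_iff hP4 hP3K2 hDart hLt hpr hpr'
    (fun _ => ⟨adj_of_adj_of_mem_support hP4 hP3K2 hDart hLt hpr hpr' hq hzu hzp hzr hpz hrz,
      adj_of_adj_of_mem_support (p := r) (r := p) hP4 hP3K2 hDart hLt (mt Adj.symm hpr)
        (Ne.symm hpr') ⟨hq.2, hq.1⟩ hzu hzr hzp hrz hpz⟩)
    hS.isClusterOn hq
    (isClique_commonNeighbors_sep_of_isIndepSet hP4 hP3K2 hDart hK33 hpr hpr' hq hS hzu hzp hzr
      hpz hrz)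

theorem isClique_setOf_eq_or_adj_and_not_adj (hP4 : ¬HasInduced pathP4 G)
    (hDart : ¬HasInduced dart G) (hpr : ¬G.Adj p r) (hq : q ∈ G.commonNeighbors p r) :
    G.IsClique {w | w = p ∨ G.Adj p w ∧ ¬G.Adj r w} := by
  rintro u (rfl | ⟨hpu, hru⟩) v (rfl | ⟨hpv, hrv⟩) huv
  · exact absurd rfl huv
  · exact hpv
  · exact hpu.symm
  by_contra huv'
  exact hDart (hasInduced_dart hq.1.symm (adj_of_adj_of_not_adj hP4 hpr hq hpu hru).symm
    (adj_of_adj_of_not_adj hP4 hpr hq hpv hrv).symm hq.2.symm hpu hpv hpr huv'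
    (mt Adj.symm hru) (mt Adj.symm hrv) huv)

theorem isCliquePairJoin_of_isIndepSet (hP4 : ¬HasInduced pathP4 G)
    (hDart : ¬HasInduced dart G) (hpr : ¬G.Adj p r) (hpr' : p ≠ r)
    (hq : q ∈ G.commonNeighbors p r) (hS : G.IsIndepSet (G.commonNeighbors p r))
    (hsupp : G.support ⊆ {w | w = p ∨ w = r ∨ G.Adj p w ∨ G.Adj r w}) :
    G.IsCliquePairJoin {w | w = p ∨ G.Adj p w ∧ ¬G.Adj r w} {w | w = r ∨ G.Adj r w ∧ ¬G.Adj p w}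
      (G.commonNeighbors p r) where
  isClique_left := isClique_setOf_eq_or_adj_and_not_adj hP4 hDart hpr hq
  isClique_right := isClique_setOf_eq_or_adj_and_not_adj hP4 hDart (mt Adj.symm hpr) ⟨hq.2, hq.1⟩
  disjoint := by
    refine Set.disjoint_left.2 fun w hA hB => ?_
    rcases hA with hw | ⟨hpw, -⟩ <;> rcases hB with hw' | ⟨hrw, hpw'⟩
    · exact hpr' (hw.symm.trans hw')
    · subst hw; exact hpr hrw.symm
    · subst hw'; exact hpr hpw
    · exact hpw' hpw
  not_adj := by
    rintro a (rfl | ⟨hpa, hra⟩) b (rfl | ⟨hrb, hpb⟩) hab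
    · exact hpr hab
    · exact hpb hab
    · exact hra hab.symm
    · exact hP4 (hasInduced_pathP4 hpa hpb hpr hab (mt Adj.symm hra) hrb.symm)
  isIndepSet := hS
  adj_left := by
    rintro a (rfl | ⟨hpa, hra⟩) d hd
    · exact hd.1
    · exact adj_of_adj_of_not_adj hP4 hpr hd hpa hra
  adj_right := by
    rintro b (rfl | ⟨hrb, hpb⟩) d hd
    · exact hd.2
    · exact adj_of_adj_of_not_adj hP4 (mt Adj.symm hpr) ⟨hd.2, hd.1⟩ hrb hpb
  support_subset v hv := by
    have := hsupp hv
    simp only [Set.mem_union, Set.mem_ofPred_eq, mem_commonNeighbors] at this ⊢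
    tauto

end InducedPath

theorem exists_isCliquePairJoin (hP4 : ¬HasInduced pathP4 G) (hP3K2 : ¬HasInduced p3PlusK2 G)
    (h3K2 : ¬HasInduced threeK2 G) (hDart : ¬HasInduced dart G)
    (hLt : ¬HasInduced ltimesGraph G) (hFH : ¬HasInduced fullHouse G)
    (hK33 : ¬HasInduced k33 G) (hW5 : ¬HasInduced wheelW5 G) :
    ∃ A B D, G.IsCliquePairJoin A B D := by
  by_cases hT : G.IsClusterOn G.support
  · exact exists_isCliquePairJoin_of_isClusterOn h3K2 hT
  simp only [IsClusterOn, not_forall] at hT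
  obtain ⟨p, -, q, -, r, -, hpq, hqr, hpr', hpr⟩ := hT
  have hq : q ∈ G.commonNeighbors p r := ⟨hpq, hqr.symm⟩
  by_cases hS : G.IsIndepSet (G.commonNeighbors p r)
  · by_cases hsupp : G.support ⊆ {w | w = p ∨ w = r ∨ G.Adj p w ∨ G.Adj r w}
    · exact ⟨_, _, _, isCliquePairJoin_of_isIndepSet hP4 hDart hpr hpr' hq hS hsupp⟩
    obtain ⟨z, ⟨u, hzu⟩, hz⟩ := Set.not_subset.1 hsupp
    simp only [Set.mem_ofPred_eq, not_or] at hz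
    obtain ⟨hzp, hzr, hpz, hrz⟩ := hz
    exact exists_isCliquePairJoin_of_isIndepSet_of_adj hP4 hP3K2 hDart hLt hK33 hpr hpr' hq hS
      hzu hzp hzr hpz hrz
  simp only [IsIndepSet, Set.Pairwise, not_forall, not_not] at hS
  obtain ⟨s, hs, t, ht, -, hst⟩ := hS
  exact exists_isCliquePairJoin_of_adj_commonNeighbors hP4 hP3K2 hDart hLt hFH hW5 hpr hpr' hs ht
    hst

end SimpleGraph

end

theorem stmt19 {V : Type*} [Fintype V] [DecidableEq V] (G : SimpleGraph V) :
    c2 G ≤ 2 ↔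
      ¬ HasInduced pathP4 G ∧ ¬ HasInduced p3PlusK2 G ∧ ¬ HasInduced threeK2 G ∧
      ¬ HasInduced dart G ∧ ¬ HasInduced ltimesGraph G ∧ ¬ HasInduced fullHouse G ∧
      ¬ HasInduced k33 G ∧ ¬ HasInduced wheelW5 G := by
  refine ⟨fun h => ?_, fun ⟨h₁, h₂, h₃, h₄, h₅, h₆, h₇, h₈⟩ => ?_⟩
  · exact ⟨not_hasInduced_of_c2_lt h two_lt_c2_pathP4,
      not_hasInduced_of_c2_lt h two_lt_c2_p3PlusK2, not_hasInduced_of_c2_lt h two_lt_c2_threeK2,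
      not_hasInduced_of_c2_lt h two_lt_c2_dart, not_hasInduced_of_c2_lt h two_lt_c2_ltimesGraph,
      not_hasInduced_of_c2_lt h two_lt_c2_fullHouse, not_hasInduced_of_c2_lt h two_lt_c2_k33,
      not_hasInduced_of_c2_lt h two_lt_c2_wheelW5⟩
  · obtain ⟨A, B, D, hG⟩ := SimpleGraph.exists_isCliquePairJoin h₁ h₂ h₃ h₄ h₅ h₆ h₇ h₈
    exact hG.c2_le_two
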